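/- Suppose φ : V → V is a linear map which is g-self-adjoint, i.e. g(φX, Y) = g(X, φY) for all X, Y ∈ V, and suppose h satisfies the foliate condition h(φX, Y) = h(X, φY) for all X, Y ∈ V. Then φ(A_N X) = A_N(φX) for every X ∈ V and every N ∈ W. (This is the pointwise linear-algebra form of Proposition 2.1.4: on a foliate ξ-horizontal mixed totally geodesic CR-submanifold of an (LCS)_n-manifold, φ A_N X = A_N φ X for all X ∈ D and every normal vector field N; in an (LCS)_n-manifold the structure tensor φ satisfies g(X, φY) = g(φX, Y), and the foliate condition gives h(X, φY) = h(φX, Y).) -/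

import Mathlib

open LinearMap

theorem shapeOperator_apply_foliate {R M N : Type*} [CommSemiring R]
    [AddCommMonoid M] [Module R M] [AddCommMonoid N] [Module R N]
    {g : LinearMap.BilinForm R M} {g' : LinearMap.BilinForm R N}
    {h : M →ₗ[R] M →ₗ[R] N} {A : N → M →ₗ[R] M}
    (hWeingarten : ∀ (ξ : N) (X Y : M), g (A ξ X) Y = g' (h X Y) ξ)
    {φ : M →ₗ[R] M} (hfoliate : ∀ X Y : M, h (φ X) Y = h X (φ Y)) (ξ : N) (X Y : M) :
    g (A ξ (φ X)) Y = g (A ξ X) (φ Y) := by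
  rw [hWeingarten, hWeingarten, hfoliate]

theorem phi_commutes_with_shape_operator_general
    {V W : Type*} [AddCommGroup V] [Module ℝ V]
    [AddCommGroup W] [Module ℝ W]
    (g : LinearMap.BilinForm ℝ V) (g' : LinearMap.BilinForm ℝ W)
    (hg_nd : g.Nondegenerate)
    (h : V →ₗ[ℝ] V →ₗ[ℝ] W)
    (A : W → V →ₗ[ℝ] V)
    (hWeingarten : ∀ (N : W) (X Y : V), g (A N X) Y = g' (h X Y) N)
    (φ : V →ₗ[ℝ] V) (hφ_selfadj : ∀ X Y : V, g (φ X) Y = g X (φ Y))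
    (hfoliate : ∀ X Y : V, h (φ X) Y = h X (φ Y)) :
    ∀ (N : W) (X : V), φ (A N X) = A N (φ X) := by
  intro N
  have hcomm : φ ∘ₗ A N = A N ∘ₗ φ := g.compLeft_injective hg_nd <| ext₂ fun X Y => by
    rw [BilinForm.compLeft_apply, BilinForm.compLeft_apply, comp_apply, comp_apply, hφ_selfadj,
      shapeOperator_apply_foliate hWeingarten hfoliate]
  exact LinearMap.congr_fun hcomm

/-- Pointwise linear-algebra form of Proposition 2.1.4: on a foliate `ξ`-horizontal mixed
totally geodesic CR-submanifold of an `(LCS)ₙ`-manifold, `φ A_N X = A_N φ X`.  Here `φ`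
is `g`-self-adjoint (`g(φX,Y) = g(X,φY)`), `h` satisfies the foliate condition
`h(φX,Y) = h(X,φY)`, and the shape operator `A` satisfies the Weingarten relation. -/
theorem phi_commutes_with_shape_operator
    {V W : Type*} [AddCommGroup V] [Module ℝ V] [FiniteDimensional ℝ V]
    [AddCommGroup W] [Module ℝ W] [FiniteDimensional ℝ W]
    (g : LinearMap.BilinForm ℝ V) (g' : LinearMap.BilinForm ℝ W)
    (hg_symm : ∀ X Y : V, g X Y = g Y X) (hg_nd : g.Nondegenerate)
    (hg'_symm : ∀ N N' : W, g' N N' = g' N' N) (hg'_nd : g'.Nondegenerate)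
    (h : V →ₗ[ℝ] V →ₗ[ℝ] W) (h_symm : ∀ X Y : V, h X Y = h Y X)
    (A : W → V →ₗ[ℝ] V)
    (hWeingarten : ∀ (N : W) (X Y : V), g (A N X) Y = g' (h X Y) N)
    (φ : V →ₗ[ℝ] V) (hφ_selfadj : ∀ X Y : V, g (φ X) Y = g X (φ Y))
    (hfoliate : ∀ X Y : V, h (φ X) Y = h X (φ Y)) :
    ∀ (N : W) (X : V), φ (A N X) = A N (φ X) :=
  phi_commutes_with_shape_operator_general g g' hg_nd h A hWeingarten φ hφ_selfadj hfoliate
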